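/- arXiv:math/0702666 — 3 statements merged into one kernel-verified Lean document; each statement's English description precedes it below -/
import Mathlib

section
/- Let F be the free group on generators a₁, …, a_s, R a finite set of relators each of which is a product of generators r = a_{i₁}⋯a_{i_p}, and π = ⟨a₁,…,a_s | R⟩ the presented group. Let ρ : π → kˣ be a group homomorphism and for each r ∈ R let λ_r : k^s → k be the linear form λ_r(t) = Σ_{μ=1}^{p} (Π_{ν<μ} ρ(a_{i_ν})) · t_{i_μ}. Then the first cohomology group H¹(π, k_ρ) is k-linearly isomorphic to the quotient of the subspace {t ∈ k^s : λ_r(t) = 0 for all r ∈ R} by the line k · (ρ(a₁) − 1, …, ρ(a_s) − 1). -/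
/-- The space `Z¹(π, k_ρ)` of 1-cocycles, as a `k`-submodule of `π → k`. -/
def Z1 (k : Type*) [Field k] {π : Type*} [Group π] (ρ : π →* kˣ) :
    Submodule k (π → k) where
  carrier := {σ | ∀ γ₁ γ₂ : π, σ (γ₁ * γ₂) = σ γ₁ + (ρ γ₁ : k) * σ γ₂}
  zero_mem' := by intro γ₁ γ₂; simp
  add_mem' := by
    intro a b ha hb γ₁ γ₂
    simp only [Pi.add_apply, ha γ₁ γ₂, hb γ₁ γ₂]
    ring
  smul_mem' := by
    intro c a ha γ₁ γ₂
    simp only [Pi.smul_apply, smul_eq_mul, ha γ₁ γ₂]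
    ring

/-- The space `B¹(π, k_ρ)` of 1-coboundaries, as a `k`-submodule of `π → k`. -/
def B1 (k : Type*) [Field k] {π : Type*} [Group π] (ρ : π →* kˣ) :
    Submodule k (π → k) where
  carrier := {σ | ∃ a : k, ∀ γ : π, σ γ = (ρ γ : k) * a - a}
  zero_mem' := ⟨0, by simp⟩
  add_mem' := by
    rintro f g ⟨a, ha⟩ ⟨b, hb⟩
    exact ⟨a + b, fun γ => by simp only [Pi.add_apply, ha γ, hb γ]; ring⟩
  smul_mem' := by
    rintro c f ⟨a, ha⟩
    exact ⟨c * a, fun γ => by simp only [Pi.smul_apply, smul_eq_mul, ha γ]; ring⟩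

/-- The first cohomology group `H¹(π, k_ρ) = Z¹(π, k_ρ)/B¹(π, k_ρ)`. -/
abbrev H1 (k : Type*) [Field k] {π : Type*} [Group π] (ρ : π →* kˣ) :=
  Z1 k ρ ⧸ (B1 k ρ).comap (Z1 k ρ).subtype

/-!
A 1-cocycle `σ` is determined by its values `tᵢ = σ(aᵢ)` on the generators, and expanding
`σ(a_{i₁}⋯a_{i_p})` with the cocycle identity gives exactly `λ_r(t)`; since `r = 1` in `π`, this
vanishes. Conversely, for `t ∈ K` the assignment `aᵢ ↦ (tᵢ, ρ(aᵢ))` into the affine group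
`k ⋊ kˣ` kills every relator, because the translation part of the image of `r` is again `λ_r(t)`;
the translation part of the resulting homomorphism `π → k ⋊ kˣ` is a cocycle with values `t` on
the generators. Under this identification `Z¹ ≅ K`, the coboundary of `a` becomes
`a · (ρ(aᵢ) − 1)ᵢ`.
-/

open SemidirectProduct

theorem Fin.prod_Iio_succ {M : Type*} [CommMonoid M] {n : ℕ} (f : Fin (n + 1) → M) (μ : Fin n) :
    ∏ ν ∈ Finset.Iio μ.succ, f ν = f 0 * ∏ ν ∈ Finset.Iio μ, f ν.succ := by
  rw [Finset.Iio_eq_Ico, bot_eq_zero, ← Finset.Ioo_insert_left (Fin.succ_pos μ),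
    Finset.prod_insert (by simp), ← Fin.map_succEmb_Iio, Finset.prod_map]
  rfl

theorem LinearMap.nonempty_quotientEquiv_of_injective {R M N : Type*} [Ring R] [AddCommGroup M]
    [Module R M] [AddCommGroup N] [Module R N] {f : M →ₗ[R] N} (hf : Function.Injective f)
    {B : Submodule R M} {K L : Submodule R N} (hK : LinearMap.range f = K) (hL : B.map f = L) :
    Nonempty ((M ⧸ B) ≃ₗ[R] (K ⧸ L.comap K.subtype)) := by
  subst hK hL
  let e := LinearEquiv.ofInjective f hf
  have he : B.map f = (B.map (e : M →ₗ[R] LinearMap.range f)).map (LinearMap.range f).subtype := by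
    rw [← Submodule.map_comp]
    rfl
  refine ⟨Submodule.Quotient.equiv B _ e ?_⟩
  rw [he, Submodule.comap_map_eq_of_injective (Submodule.subtype_injective _)]

section Cocycle

variable {k : Type*} [Field k] {G : Type*} [Group G] {ρ : G →* kˣ} {σ : G → k}

/-- `λ_r(t)` for the word `r = g l₀ ⋯ g lₚ₋₁`. -/
def relatorForm (ρ : G →* kˣ) {ι : Type*} (g : ι → G) (l : List ι) (t : ι → k) : k :=
  ∑ μ : Fin l.length, (∏ ν ∈ Finset.Iio μ, (ρ (g (l.get ν)) : k)) * t (l.get μ)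

theorem Z1.apply_one (hσ : σ ∈ Z1 k ρ) : σ 1 = 0 := by
  simpa using hσ 1 1

theorem Z1.apply_list_prod (hσ : σ ∈ Z1 k ρ) {ι : Type*} (g : ι → G) (l : List ι) :
    σ (l.map g).prod = relatorForm ρ g l (fun i => σ (g i)) := by
  induction l with
  | nil => simp [relatorForm, Z1.apply_one hσ]
  | cons a l ih =>
    have hIio : Finset.Iio (0 : Fin (l.length + 1)) = ∅ := Finset.Iio_bot
    rw [List.map_cons, List.prod_cons, hσ, ih]
    simp [relatorForm, Fin.sum_univ_succ, Fin.prod_Iio_succ, Finset.mul_sum, mul_assoc, hIio]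

theorem Z1.comp_mem (hσ : σ ∈ Z1 k ρ) {H : Type*} [Group H] (f : H →* G) :
    σ ∘ f ∈ Z1 k (ρ.comp f) := fun γ₁ γ₂ => by
  simpa using hσ (f γ₁) (f γ₂)

theorem Z1.eq_zero_of_closure_eq_top (hσ : σ ∈ Z1 k ρ) {S : Set G}
    (hS : Subgroup.closure S = ⊤) (hσS : ∀ γ ∈ S, σ γ = 0) : σ = 0 := by
  refine funext fun γ => ?_
  rw [Pi.zero_apply]
  induction (hS ▸ Subgroup.mem_top γ : γ ∈ Subgroup.closure S) using Subgroup.closure_induction with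
  | mem x hx => exact hσS x hx
  | one => exact Z1.apply_one hσ
  | mul x y _ _ hx hy => rw [hσ, hx, hy, mul_zero, add_zero]
  | inv x _ hx =>
    have h := hσ x x⁻¹
    rw [mul_inv_cancel, Z1.apply_one hσ, hx, zero_add] at h
    exact (Units.mul_right_eq_zero (ρ x)).mp h.symm

theorem B1_eq_span : B1 k ρ = Submodule.span k {fun γ => (ρ γ : k) - 1} := by
  ext σ
  rw [Submodule.mem_span_singleton]
  constructor
  · rintro ⟨a, ha⟩
    exact ⟨a, funext fun γ => by simp [ha, mul_sub, mul_comm]⟩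
  · rintro ⟨a, rfl⟩
    exact ⟨a, fun γ => by simp [mul_sub, mul_comm]⟩

theorem B1_le_Z1 : B1 k ρ ≤ Z1 k ρ := by
  rintro σ ⟨a, ha⟩ γ₁ γ₂
  simp only [ha, map_mul, Units.val_mul]
  ring

variable (ρ) in
def Z1.restrict {ι : Type*} (g : ι → G) : Z1 k ρ →ₗ[k] ι → k :=
  LinearMap.funLeft k k g ∘ₗ (Z1 k ρ).subtype

theorem Z1.restrict_injective {ι : Type*} {g : ι → G}
    (hg : Subgroup.closure (Set.range g) = ⊤) : Function.Injective (Z1.restrict ρ g) := by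
  rw [injective_iff_map_eq_zero]
  intro σ hσ
  refine Subtype.ext (Z1.eq_zero_of_closure_eq_top σ.2 hg ?_)
  rintro _ ⟨i, rfl⟩
  exact congrFun hσ i

theorem Z1.map_restrict_B1 {ι : Type*} (g : ι → G) :
    ((B1 k ρ).comap (Z1 k ρ).subtype).map (Z1.restrict ρ g) =
      Submodule.span k {fun i => (ρ (g i) : k) - 1} := by
  rw [Z1.restrict, Submodule.map_comp, Submodule.map_comap_subtype, inf_eq_right.mpr B1_le_Z1,
    B1_eq_span, Submodule.map_span, Set.image_singleton]
  rfl

end Cocycle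

/-- The affine group of the line: `(b, u)` acts on `k` by `x ↦ u x + b`. -/
abbrev AffineGroup (k : Type*) [Ring k] :=
  Multiplicative k ⋊[(MulAutMultiplicative k).symm.toMonoidHom.comp
    (DistribMulAction.toAddAut kˣ k)] kˣ

theorem AffineGroup.toAdd_left_mem_Z1 {k : Type*} [Field k] :
    (fun x : AffineGroup k => x.left.toAdd) ∈ Z1 k rightHom := fun x y => by
  change (x * y).left.toAdd = _
  rw [mul_left, toAdd_mul]
  rfl

section Presented

variable {ι : Type*}

abbrev relators (R : Set (List ι)) : Set (FreeGroup ι) :=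
  {w | ∃ l ∈ R, w = (l.map FreeGroup.of).prod}

theorem PresentedGroup.list_prod_of_eq_one {R : Set (List ι)} {l : List ι} (hl : l ∈ R) :
    (l.map (PresentedGroup.of (rels := relators R))).prod = 1 := by
  have : (l.map (PresentedGroup.of (rels := relators R))).prod =
      PresentedGroup.mk _ (l.map FreeGroup.of).prod := by
    rw [map_list_prod, List.map_map]
    rfl
  rw [this]
  exact PresentedGroup.one_of_mem ⟨l, hl, rfl⟩

variable {k : Type*} [Field k] {R : Set (List ι)} (ρ : PresentedGroup (relators R) →* kˣ)

theorem Z1.exists_of_relatorForm_eq_zero {t : ι → k}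
    (ht : ∀ l ∈ R, relatorForm ρ PresentedGroup.of l t = 0) :
    ∃ σ ∈ Z1 k ρ, ∀ i, σ (PresentedGroup.of i) = t i := by
  let f : ι → AffineGroup k := fun i => ⟨Multiplicative.ofAdd (t i), ρ (PresentedGroup.of i)⟩
  have hf : ∀ r ∈ relators R, FreeGroup.lift f r = 1 := by
    rintro _ ⟨l, hl, rfl⟩
    simp only [map_list_prod, List.map_map, Function.comp_def, FreeGroup.lift_apply_of]
    refine SemidirectProduct.ext ?_ ?_
    · exact (Z1.apply_list_prod AffineGroup.toAdd_left_mem_Z1 f l).trans (ht l hl)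
    · change (rightHom (l.map f).prod : kˣ) = rightHom (1 : AffineGroup k)
      rw [map_list_prod, List.map_map, map_one]
      change (l.map (ρ ∘ PresentedGroup.of)).prod = 1
      rw [← List.map_map, ← map_list_prod, PresentedGroup.list_prod_of_eq_one hl, map_one]
  let T := PresentedGroup.toGroup hf
  have hT : rightHom.comp T = ρ := PresentedGroup.ext fun i => by
    rw [MonoidHom.comp_apply, PresentedGroup.toGroup.of]
    rfl
  refine ⟨fun γ => (T γ).left.toAdd, ?_, fun i => by
    change (T (PresentedGroup.of i)).left.toAdd = t i
    rw [PresentedGroup.toGroup.of]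
    rfl⟩
  rw [← hT]
  exact Z1.comp_mem AffineGroup.toAdd_left_mem_Z1 T

theorem Z1.mem_range_restrict_of_iff (t : ι → k) :
    t ∈ LinearMap.range (Z1.restrict ρ PresentedGroup.of) ↔
      ∀ l ∈ R, relatorForm ρ PresentedGroup.of l t = 0 := by
  constructor
  · rintro ⟨σ, rfl⟩ l hl
    change relatorForm ρ _ l (fun i => σ.1 (PresentedGroup.of i)) = 0
    rw [← Z1.apply_list_prod σ.2, PresentedGroup.list_prod_of_eq_one hl, Z1.apply_one σ.2]
  · intro ht
    obtain ⟨σ, hσ, hσt⟩ := Z1.exists_of_relatorForm_eq_zero ρ ht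
    exact ⟨⟨σ, hσ⟩, funext hσt⟩

end Presented

/-- For a presented group `π = ⟨a₁,…,a_s | R⟩` with each relator a
product of generators (recorded as a list of indices) and a homomorphism
`ρ : π → kˣ`, the first cohomology `H¹(π, k_ρ)` is `k`-linearly isomorphic to the
quotient of `{t ∈ k^s : λ_r(t) = 0 for all r ∈ R}` by the line
`k · (ρ(a₁) − 1, …, ρ(a_s) − 1)`, where
`λ_r(t) = Σ_μ (Π_{ν<μ} ρ(a_{i_ν})) · t_{i_μ}` for `r = a_{i₁}⋯a_{i_p}`. -/
theorem presented_H1_iso {k : Type*} [Field k] {s : ℕ}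
    (R : Finset (List (Fin s)))
    (ρ : PresentedGroup {w : FreeGroup (Fin s) | ∃ l ∈ R, w = (l.map FreeGroup.of).prod} →* kˣ)
    (K : Submodule k (Fin s → k))
    (hK : ∀ t : Fin s → k, t ∈ K ↔ ∀ l ∈ R,
      ∑ μ : Fin l.length,
        (∏ ν ∈ Finset.Iio μ, (ρ (PresentedGroup.of (l.get ν)) : k)) * t (l.get μ) = 0)
    (L : Submodule k (Fin s → k))
    (hL : L = Submodule.span k {fun i : Fin s => (ρ (PresentedGroup.of i) : k) - 1}) :
    Nonempty (H1 k ρ ≃ₗ[k] (K ⧸ (L.comap K.subtype))) := by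
  refine LinearMap.nonempty_quotientEquiv_of_injective
    (Z1.restrict_injective (PresentedGroup.closure_range_of _)) ?_ (hL ▸ Z1.map_restrict_B1 _)
  ext t
  exact (Z1.mem_range_restrict_of_iff (R := (R : Set (List (Fin s)))) ρ t).trans (hK t).symm
end

section
/- Let F_s be the free group on s ≥ 2 generators and let ρ : F_s → U(1) be a nontrivial group homomorphism. For τ ∈ Z¹(F_s, ℂ_ρ), let φ_τ : F_s → SE(2) be the homomorphism φ_τ(γ) = ((ρ(γ), τ(γ)), (0, 1)). Then the assignment τ ↦ [τ] ∈ H¹(F_s, ℂ_ρ) induces a bijection between the set of Sim(2)-conjugacy classes of homomorphisms φ : F_s → SE(2) whose character equals ρ and whose translation part is not a coboundary, and the projectivization ℙ(H¹(F_s, ℂ_ρ)) of the (s−1)-dimensional complex vector space H¹(F_s, ℂ_ρ); that is, φ_{τ₁} and φ_{τ₂} (with τ₁, τ₂ ∉ B¹) are Sim(2)-conjugate if and only if the nonzero classes [τ₁], [τ₂] span the same complex line in H¹(F_s, ℂ_ρ). -/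
/-!
Conjugating the affine matrix `!![r, t; 0, 1]` by `!![a, -c; 0, 1] ∈ Sim(2)` keeps the
linear part `r` and replaces the translation part `t` by `a * t + (r * c - c)`. Hence
`φ_{τ₁}` and `φ_{τ₂}` are `Sim(2)`-conjugate exactly when `τ₂ = a • τ₁ + δc` for some
`a ≠ 0` and some coboundary `δc`, i.e. when `[τ₂] = a [τ₁]` in `H¹`.
-/

namespace Matrix

variable {K : Type*} [Field K]

theorem affine_inv {a : K} (ha : a ≠ 0) (b : K) :
    (!![a, b; 0, 1])⁻¹ = !![a⁻¹, -(a⁻¹ * b); 0, 1] := by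
  rw [inv_eq_right_inv]
  ext i j
  fin_cases i <;> fin_cases j <;> simp [mul_apply, ha]

theorem affine_conj {a : K} (ha : a ≠ 0) (c r t : K) :
    !![a, -c; 0, 1] * !![r, t; 0, 1] * (!![a, -c; 0, 1])⁻¹ =
      !![r, a * t + (r * c - c); 0, 1] := by
  rw [affine_inv ha]
  ext i j
  fin_cases i <;> fin_cases j <;> simp [mul_apply, mul_right_comm a r, ha]
  ring

theorem eq_affine_of_row_one {g : Matrix (Fin 2) (Fin 2) K} (h10 : g 1 0 = 0) (h11 : g 1 1 = 1) :
    g = !![g 0 0, -(-g 0 1); 0, 1] := by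
  rw [neg_neg, ← h10, ← h11]
  exact eta_fin_two g

end Matrix

theorem SE2_conjugacy_classes_projective_general (s : ℕ)
    (ρ τ₁ τ₂ : FreeGroup (Fin s) → ℂ) :
    (∃ g : Matrix (Fin 2) (Fin 2) ℂ, g 0 0 ≠ 0 ∧ g 1 0 = 0 ∧ g 1 1 = 1 ∧
        ∀ γ, !![ρ γ, τ₂ γ; 0, 1] = g * !![ρ γ, τ₁ γ; 0, 1] * g⁻¹) ↔
      ∃ a : ℂ, a ≠ 0 ∧ ∃ b : ℂ, ∀ γ, τ₂ γ = a * τ₁ γ + (ρ γ * b - b) := by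
  constructor
  · rintro ⟨g, hg00, hg10, hg11, hg⟩
    refine ⟨g 0 0, hg00, -g 0 1, fun γ => ?_⟩
    have hconj := hg γ
    rw [Matrix.eq_affine_of_row_one hg10 hg11, Matrix.affine_conj hg00] at hconj
    simpa using congrArg (· 0 1) hconj
  · rintro ⟨a, ha, b, hab⟩
    refine ⟨!![a, -b; 0, 1], by simpa using ha, rfl, rfl, fun γ => ?_⟩
    rw [Matrix.affine_conj ha, hab]

/-- Let `F_s` be the free group on `s ≥ 2` generators and
`ρ : F_s → U(1)` a nontrivial homomorphism. For cocycles `τ₁, τ₂ ∈ Z¹(F_s, ℂ_ρ)`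
which are not coboundaries, let `φ_{τⱼ}(γ) = ((ρ(γ), τⱼ(γ)), (0, 1)) ∈ SE(2)`.
Then `φ_{τ₁}` and `φ_{τ₂}` are conjugate by an element of `Sim(2)` iff the nonzero
classes `[τ₁], [τ₂]` span the same complex line in `H¹(F_s, ℂ_ρ)`, i.e. iff there
is `a ∈ ℂ*` with `[τ₂] = a·[τ₁]`, i.e. `τ₂ − a·τ₁ ∈ B¹(F_s, ℂ_ρ)`. (This is the
bijectivity of the induced map from `Sim(2)`-conjugacy classes of homomorphisms
`F_s → SE(2)` with character `ρ` and non-coboundary translation part onto the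
projectivization `ℙ(H¹(F_s, ℂ_ρ))`.) -/
theorem SE2_conjugacy_classes_projective (s : ℕ) (hs : 2 ≤ s)
    (ρ τ₁ τ₂ : FreeGroup (Fin s) → ℂ)
    (hρu : ∀ γ, ‖ρ γ‖ = 1)
    (hρm : ∀ γ₁ γ₂, ρ (γ₁ * γ₂) = ρ γ₁ * ρ γ₂)
    (hρnt : ∃ γ, ρ γ ≠ 1)
    (hτ₁ : ∀ γ₁ γ₂, τ₁ (γ₁ * γ₂) = τ₁ γ₁ + ρ γ₁ * τ₁ γ₂)
    (hτ₂ : ∀ γ₁ γ₂, τ₂ (γ₁ * γ₂) = τ₂ γ₁ + ρ γ₁ * τ₂ γ₂)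
    (hτ₁nb : ¬ ∃ b : ℂ, ∀ γ, τ₁ γ = ρ γ * b - b)
    (hτ₂nb : ¬ ∃ b : ℂ, ∀ γ, τ₂ γ = ρ γ * b - b) :
    (∃ g : Matrix (Fin 2) (Fin 2) ℂ, g 0 0 ≠ 0 ∧ g 1 0 = 0 ∧ g 1 1 = 1 ∧
        ∀ γ, !![ρ γ, τ₂ γ; 0, 1] = g * !![ρ γ, τ₁ γ; 0, 1] * g⁻¹) ↔
      ∃ a : ℂ, a ≠ 0 ∧ ∃ b : ℂ, ∀ γ, τ₂ γ = a * τ₁ γ + (ρ γ * b - b) :=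
  SE2_conjugacy_classes_projective_general s ρ τ₁ τ₂
end

section
/- Let PSL₂(ℝ) be the quotient of the group SL₂(ℝ) of 2×2 real matrices of determinant 1 by its center {±I}, equipped with the quotient topology. If Γ is a subgroup of PSL₂(ℝ) that is discrete (i.e. the subspace topology on Γ is discrete) and whose center Z(Γ) is nontrivial, then Γ is cyclic. Equivalently, the center of a discrete subgroup of PSL₂(ℝ) is trivial unless the subgroup is cyclic. -/
/-!
A nontrivial central element of `Γ` lifts to a non-scalar `A ∈ SL₂(ℝ)`. A lift of any element of
`Γ` commutes with `A` up to sign, and the sign is `+` because two real `2 × 2` matrices of positive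
determinant never anticommute. Hence every element of `Γ` lifts to some `x • 1 + y • M` with
`x² + det M · y² = 1`, where `M` is the traceless part of `A`. Up to sign these matrices form the
image of a continuous one-parameter subgroup `s ↦ c s • 1 + d s • M` which is injective near `0`
(cosine and sine, `1` and `s`, or hyperbolic cosine and sine, according to the sign of `det M`).
Since `Γ` is discrete, its preimage in `ℝ` has `0` isolated, so it is cyclic, and so is `Γ`.
-/

/-- `SL₂(ℝ)`: the group of 2×2 real matrices of determinant 1. -/
abbrev SL2R := Matrix.SpecialLinearGroup (Fin 2) ℝ

/-- The topology on `SL₂(ℝ)` induced from the space of 2×2 real matrices. -/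
instance : TopologicalSpace SL2R :=
  TopologicalSpace.induced (fun g : SL2R => (g : Matrix (Fin 2) (Fin 2) ℝ)) inferInstance

/-- `PSL₂(ℝ) = SL₂(ℝ)/{±I}`: the quotient of `SL₂(ℝ)` by its center, with the
quotient topology. -/
abbrev PSL2R := SL2R ⧸ Subgroup.center SL2R

open Set Filter Topology Matrix

namespace Matrix

section CommRing

variable {R : Type*} [CommRing R] {M : Matrix (Fin 2) (Fin 2) R}

lemma mul_self_of_trace_eq_zero (hM : M.trace = 0) :
    M * M = -M.det • (1 : Matrix (Fin 2) (Fin 2) R) := by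
  rw [trace_fin_two] at hM
  ext i j
  fin_cases i <;> fin_cases j <;> simp [mul_apply, det_fin_two]
  · linear_combination M 0 0 * hM
  · linear_combination M 0 1 * hM
  · linear_combination M 1 0 * hM
  · linear_combination M 1 1 * hM

lemma det_smul_one_add_smul (hM : M.trace = 0) (x y : R) :
    (x • 1 + y • M).det = x ^ 2 + M.det * y ^ 2 := by
  rw [trace_fin_two] at hM
  simp [det_fin_two]
  linear_combination x * y * hM

lemma smul_one_add_smul_mul_smul_one_add_smul (hM : M.trace = 0) (x y x' y' : R) :
    (x • 1 + y • M) * (x' • 1 + y' • M) =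
      (x * x' - M.det * (y * y')) • 1 + (x * y' + y * x') • M := by
  simp only [add_mul, mul_add, smul_mul_smul, one_mul, mul_one, mul_self_of_trace_eq_zero hM]
  module

end CommRing

lemma eq_zero_of_smul_one_add_smul_eq_smul_one {n K : Type*} [Fintype n] [DecidableEq n]
    [Field K] {M : Matrix n n K} (hM : ∀ r : K, M ≠ r • 1) {x y z : K} (h : x • 1 + y • M = z • 1) :
    y = 0 := by
  by_contra hy
  refine hM ((z - x) / y) ?_
  rw [div_eq_inv_mul, mul_smul, sub_smul, ← h, add_sub_cancel_left, smul_smul,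
    inv_mul_cancel₀ hy, one_smul]

lemma exists_eq_smul_one_add_smul_of_commute {K : Type*} [Field K]
    {A B : Matrix (Fin 2) (Fin 2) K} (hA : ∀ r : K, A ≠ r • 1) (hAB : Commute A B) :
    ∃ x y : K, B = x • 1 + y • A := by
  -- commuting with `A` makes `(B 0 1, B 1 0, B 0 0 - B 1 1)` proportional to the nonzero vector
  -- `(A 0 1, A 1 0, A 0 0 - A 1 1)`
  have e (i j : Fin 2) := congrFun₂ hAB.eq i j
  simp only [mul_apply, Fin.sum_univ_two] at e
  have m₁ : B 0 1 * A 1 0 = B 1 0 * A 0 1 := by linear_combination -e 0 0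
  have m₂ : B 0 1 * (A 0 0 - A 1 1) = (B 0 0 - B 1 1) * A 0 1 := by linear_combination e 0 1
  have m₃ : B 1 0 * (A 0 0 - A 1 1) = (B 0 0 - B 1 1) * A 1 0 := by linear_combination -e 1 0
  obtain ⟨y, h01, h10, hdiag⟩ : ∃ y, B 0 1 = y * A 0 1 ∧ B 1 0 = y * A 1 0 ∧
      B 0 0 - B 1 1 = y * (A 0 0 - A 1 1) := by
    by_cases hb : A 0 1 = 0
    · by_cases hc : A 1 0 = 0
      · have had : A 0 0 - A 1 1 ≠ 0 := fun h ↦ hA (A 0 0) <| by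
          ext i j; fin_cases i <;> fin_cases j <;> simp [hb, hc, sub_eq_zero.mp h]
        refine ⟨(B 0 0 - B 1 1) / (A 0 0 - A 1 1), ?_, ?_, by field_simp⟩ <;> field_simp
        · exact m₂
        · exact m₃
      · refine ⟨B 1 0 / A 1 0, ?_, by field_simp, ?_⟩ <;> field_simp
        · exact m₁
        · exact m₃.symm
    · refine ⟨B 0 1 / A 0 1, by field_simp, ?_, ?_⟩ <;> field_simp
      · exact m₁.symm
      · exact m₂.symm
  refine ⟨B 0 0 - y * A 0 0, y, ?_⟩
  ext i j; fin_cases i <;> fin_cases j <;> simp [h01, h10]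
  linear_combination -hdiag

lemma trace_eq_zero_of_mul_eq_neg_mul {n K : Type*} [Fintype n] [DecidableEq n] [Field K]
    [NeZero (2 : K)] {A B : Matrix n n K} (hB : IsUnit B.det) (h : B * A = -(A * B)) :
    A.trace = 0 := by
  have hconj : B * A * B⁻¹ = -A := by
    rw [h, neg_mul, Matrix.mul_assoc, mul_nonsing_inv _ hB, Matrix.mul_one]
  have := congrArg trace hconj
  rw [trace_mul_cycle, nonsing_inv_mul _ hB, Matrix.one_mul, trace_neg] at this
  have h2 : (2 : K) * A.trace = 0 := by linear_combination this
  exact (mul_eq_zero.mp h2).resolve_left two_ne_zero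

lemma mul_ne_neg_mul_of_det_pos {K : Type*} [Field K] [LinearOrder K] [IsStrictOrderedRing K]
    {A B : Matrix (Fin 2) (Fin 2) K} (hA : 0 < A.det) (hB : 0 < B.det) : B * A ≠ -(A * B) := by
  intro h
  have htA := trace_eq_zero_of_mul_eq_neg_mul hB.ne'.isUnit h
  have htB := trace_eq_zero_of_mul_eq_neg_mul (B := A) hA.ne'.isUnit (by rw [h, neg_neg])
  have htAB : (A * B).trace = 0 := by
    have := congrArg trace h
    rw [trace_neg, trace_mul_comm] at this
    linarith
  rw [trace_fin_two] at htA htB htAB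
  rw [det_fin_two] at hA hB
  simp only [mul_apply, Fin.sum_univ_two] at htAB
  have hA' : A 0 1 * A 1 0 < -A 0 0 ^ 2 := by linear_combination hA + A 0 0 * htA
  have hB' : B 0 1 * B 1 0 < -B 0 0 ^ 2 := by linear_combination hB + B 0 0 * htB
  have hAB' : A 0 1 * B 1 0 + A 1 0 * B 0 1 = -2 * (A 0 0 * B 0 0) := by
    linear_combination htAB + B 0 0 * htA - A 1 1 * htB
  -- `-det` has signature `(2, 1)` on traceless matrices, and `A`, `B` would be orthogonal
  -- negative vectors: `(A₀₁B₁₀ + A₁₀B₀₁)² ≥ 4 A₀₁A₁₀ B₀₁B₁₀ > 4 (A₀₀B₀₀)²`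
  have hprod : (A 0 0 * B 0 0) ^ 2 < (A 0 1 * A 1 0) * (B 0 1 * B 1 0) := by
    nlinarith [mul_pos (sub_pos.mpr hA') (sub_pos.mpr hB'),
      mul_nonneg (sq_nonneg (A 0 0)) (sub_pos.mpr hB').le,
      mul_nonneg (sub_pos.mpr hA').le (sq_nonneg (B 0 0))]
  have hsq : (A 0 1 * B 1 0 + A 1 0 * B 0 1) ^ 2 = 4 * (A 0 0 * B 0 0) ^ 2 := by
    rw [hAB']; ring
  nlinarith [sq_nonneg (A 0 1 * B 1 0 - A 1 0 * B 0 1)]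

end Matrix

/-- `s ↦ c s + d s • √(-δ)` is a continuous one-parameter group of norm-one elements of `ℝ[√(-δ)]`,
nontrivial near `0`, reaching every norm-one element up to sign. -/
structure IsCosSinPair (δ : ℝ) (c d : ℝ → ℝ) : Prop where
  continuous_cos : Continuous c
  continuous_sin : Continuous d
  cos_add : ∀ s t, c (s + t) = c s * c t - δ * (d s * d t)
  sin_add : ∀ s t, d (s + t) = c s * d t + d s * c t
  cos_sq_add_sin_sq : ∀ s, c s ^ 2 + δ * d s ^ 2 = 1
  eventually_sin_ne_zero : ∀ᶠ s in 𝓝[>] 0, d s ≠ 0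
  exists_eq_or_eq_neg : ∀ x y, x ^ 2 + δ * y ^ 2 = 1 →
    ∃ s, (c s = x ∧ d s = y) ∨ (c s = -x ∧ d s = -y)

namespace IsCosSinPair

open Real

lemma cos_sin : IsCosSinPair 1 cos sin where
  continuous_cos := Real.continuous_cos
  continuous_sin := Real.continuous_sin
  cos_add s t := by rw [Real.cos_add, one_mul]
  sin_add s t := by rw [Real.sin_add]; ring
  cos_sq_add_sin_sq s := by rw [one_mul, Real.cos_sq_add_sin_sq]
  eventually_sin_ne_zero := by
    filter_upwards [Ioo_mem_nhdsGT pi_pos] with s hs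
    exact (sin_pos_of_pos_of_lt_pi hs.1 hs.2).ne'
  exists_eq_or_eq_neg x y h := by
    have hz : ‖(⟨x, y⟩ : ℂ)‖ = 1 := by
      rw [Complex.norm_def, Complex.normSq_mk, ← sq, ← sq, ← one_mul (y ^ 2), h, Real.sqrt_one]
    refine ⟨Complex.arg ⟨x, y⟩, Or.inl ⟨?_, ?_⟩⟩
    · simpa [hz] using Complex.norm_mul_cos_arg ⟨x, y⟩
    · simpa [hz] using Complex.norm_mul_sin_arg ⟨x, y⟩

lemma one_id : IsCosSinPair 0 (fun _ ↦ 1) id where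
  continuous_cos := continuous_const
  continuous_sin := continuous_id
  cos_add s t := by ring
  sin_add s t := by simp [add_comm]
  cos_sq_add_sin_sq s := by ring
  eventually_sin_ne_zero := by
    filter_upwards [self_mem_nhdsWithin] with s hs using ne_of_gt hs
  exists_eq_or_eq_neg x y h := by
    rcases sq_eq_one_iff.mp (by linarith : x ^ 2 = 1) with rfl | rfl
    · exact ⟨y, Or.inl ⟨rfl, rfl⟩⟩
    · exact ⟨-y, Or.inr ⟨by norm_num, rfl⟩⟩

lemma cosh_sinh : IsCosSinPair (-1) cosh sinh where
  continuous_cos := continuous_cosh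
  continuous_sin := continuous_sinh
  cos_add s t := by rw [cosh_add]; ring
  sin_add s t := by rw [sinh_add]; ring
  cos_sq_add_sin_sq s := by linear_combination cosh_sq_sub_sinh_sq s
  eventually_sin_ne_zero := by
    filter_upwards [self_mem_nhdsWithin] with s hs using (sinh_pos_iff.mpr hs).ne'
  exists_eq_or_eq_neg x y h := by
    have cosh_arsinh_eq_abs (z : ℝ) (hz : z ^ 2 = y ^ 2) : cosh (arsinh z) = |x| := by
      rw [cosh_arsinh, ← Real.sqrt_sq_eq_abs]; congr 1; linear_combination hz - h
    rcases le_or_gt 0 x with hx | hx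
    · refine ⟨arsinh y, Or.inl ⟨?_, sinh_arsinh y⟩⟩
      rw [cosh_arsinh_eq_abs y rfl, abs_of_nonneg hx]
    · refine ⟨arsinh (-y), Or.inr ⟨?_, sinh_arsinh _⟩⟩
      rw [cosh_arsinh_eq_abs (-y) (neg_sq y), abs_of_neg hx]

lemma div_const {δ : ℝ} {c d : ℝ → ℝ} (h : IsCosSinPair δ c d) {k : ℝ} (hk : k ≠ 0) :
    IsCosSinPair (δ * k ^ 2) c (fun s ↦ d s / k) where
  continuous_cos := h.continuous_cos
  continuous_sin := h.continuous_sin.div_const k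
  cos_add s t := by rw [h.cos_add]; field_simp
  sin_add s t := by rw [h.sin_add]; ring
  cos_sq_add_sin_sq s := by rw [← h.cos_sq_add_sin_sq s]; field_simp
  eventually_sin_ne_zero := h.eventually_sin_ne_zero.mono fun s hs ↦ div_ne_zero hs hk
  exists_eq_or_eq_neg x y hxy := by
    obtain ⟨s, hs | hs⟩ := h.exists_eq_or_eq_neg x (k * y) (by rw [← hxy]; ring)
    · exact ⟨s, Or.inl ⟨hs.1, by rw [hs.2]; field_simp⟩⟩
    · exact ⟨s, Or.inr ⟨hs.1, by rw [hs.2]; field_simp⟩⟩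

end IsCosSinPair

lemma exists_isCosSinPair (δ : ℝ) : ∃ c d, IsCosSinPair δ c d := by
  rcases lt_trichotomy δ 0 with hδ | rfl | hδ
  · obtain ⟨k, hk, rfl⟩ : ∃ k ≠ 0, δ = -1 * k ^ 2 :=
      ⟨√(-δ), (Real.sqrt_pos.mpr (neg_pos.mpr hδ)).ne', by rw [Real.sq_sqrt (by linarith)]; ring⟩
    exact ⟨_, _, IsCosSinPair.cosh_sinh.div_const hk⟩
  · exact ⟨_, _, IsCosSinPair.one_id⟩
  · obtain ⟨k, hk, rfl⟩ : ∃ k ≠ 0, δ = 1 * k ^ 2 :=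
      ⟨√δ, (Real.sqrt_pos.mpr hδ).ne', by rw [Real.sq_sqrt hδ.le, one_mul]⟩
    exact ⟨_, _, IsCosSinPair.cos_sin.div_const hk⟩

namespace SL2R

lemma mem_center_iff {g : SL2R} : g ∈ Subgroup.center SL2R ↔ g = 1 ∨ g = -1 := by
  rw [Matrix.SpecialLinearGroup.mem_center_iff, Fintype.card_fin]
  constructor
  · rintro ⟨r, hr, hrg⟩
    rcases sq_eq_one_iff.mp hr with rfl | rfl
    · left; ext1; simp [← hrg]
    · right; ext1; simp [← hrg, map_neg]
  · rintro (rfl | rfl)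
    · exact ⟨1, one_pow 2, map_one _⟩
    · exact ⟨-1, by norm_num, by simp [map_neg]⟩

lemma coe_ne_smul_one {g : SL2R} (hg : g ∉ Subgroup.center SL2R) (r : ℝ) :
    (g : Matrix (Fin 2) (Fin 2) ℝ) ≠ r • 1 := by
  intro h
  refine hg (Matrix.SpecialLinearGroup.mem_center_iff.mpr ⟨r, ?_, ?_⟩)
  · simpa [h] using g.2
  · rw [h, smul_one_eq_diagonal]; rfl

lemma mk_eq_mk_iff {g h : SL2R} : (g : PSL2R) = h ↔ g = h ∨ g = -h := by
  rw [QuotientGroup.eq, mem_center_iff, inv_mul_eq_one, inv_mul_eq_iff_eq_mul, mul_neg_one,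
    @eq_comm _ h, neg_eq_iff_eq_neg]

lemma commute_of_commute_mk {g h : SL2R} (hgh : Commute (g : PSL2R) h) : Commute g h := by
  have : ((g * h : SL2R) : PSL2R) = (h * g : SL2R) := hgh.eq
  refine (mk_eq_mk_iff.mp this).resolve_right fun hneg ↦ ?_
  exact Matrix.mul_ne_neg_mul_of_det_pos (A := (h : Matrix (Fin 2) (Fin 2) ℝ)) (B := g)
    (by simp) (by simp)
    (by simpa using congrArg (fun g : SL2R ↦ (g : Matrix (Fin 2) (Fin 2) ℝ)) hneg)

section cosSinHom

variable {M : Matrix (Fin 2) (Fin 2) ℝ} (hM : M.trace = 0) {c d : ℝ → ℝ}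
  (h : IsCosSinPair M.det c d)

def cosSinHom : Multiplicative ℝ →* SL2R :=
  MonoidHom.mk' (fun s ↦ ⟨c s.toAdd • 1 + d s.toAdd • M, by
      rw [det_smul_one_add_smul hM, ← h.cos_sq_add_sin_sq s.toAdd]⟩)
    fun s t ↦ Subtype.ext <| by
      simp only [toAdd_mul, h.cos_add, h.sin_add]
      exact (smul_one_add_smul_mul_smul_one_add_smul hM ..).symm

lemma coe_cosSinHom (s : ℝ) :
    (cosSinHom hM h (.ofAdd s) : Matrix (Fin 2) (Fin 2) ℝ) = c s • 1 + d s • M := rfl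

lemma continuous_cosSinHom : Continuous (cosSinHom hM h) := by
  refine continuous_induced_rng.mpr ?_
  have hc := h.continuous_cos.comp continuous_toAdd
  have hd := h.continuous_sin.comp continuous_toAdd
  exact (hc.smul continuous_const).add (hd.smul continuous_const)

lemma sin_eq_zero_of_cosSinHom_mem_center (hMs : ∀ r : ℝ, M ≠ r • 1) {s : ℝ}
    (hs : cosSinHom hM h (.ofAdd s) ∈ Subgroup.center SL2R) : d s = 0 := by
  have hpm : c s • 1 + d s • M = (1 : ℝ) • 1 ∨ c s • 1 + d s • M = (-1 : ℝ) • 1 := by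
    rw [← coe_cosSinHom hM h s]
    rcases mem_center_iff.mp hs with hs | hs <;> simp [hs]
  rcases hpm with hpm | hpm <;> exact eq_zero_of_smul_one_add_smul_eq_smul_one hMs hpm

lemma exists_cosSinHom_eq_or_eq_neg {B : SL2R} {x y : ℝ}
    (hB : (B : Matrix (Fin 2) (Fin 2) ℝ) = x • 1 + y • M) :
    ∃ s, cosSinHom hM h (.ofAdd s) = B ∨ cosSinHom hM h (.ofAdd s) = -B := by
  have hdet : x ^ 2 + M.det * y ^ 2 = 1 := by rw [← det_smul_one_add_smul hM, ← hB, B.2]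
  obtain ⟨s, ⟨hc, hd⟩ | ⟨hc, hd⟩⟩ := h.exists_eq_or_eq_neg x y hdet
  · exact ⟨s, Or.inl <| Subtype.ext <| by rw [coe_cosSinHom, hc, hd, hB]⟩
  · refine ⟨s, Or.inr <| Subtype.ext ?_⟩
    rw [coe_cosSinHom, hc, hd, SpecialLinearGroup.coe_neg, hB]
    module

end cosSinHom

end SL2R

theorem PSL2R.exists_centralizer_le_range {z : PSL2R} (hz : z ≠ 1) :
    ∃ ψ : Multiplicative ℝ →* PSL2R, Continuous ψ ∧ (∀ᶠ s in 𝓝[>] 0, ψ (.ofAdd s) ≠ 1) ∧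
      Subgroup.centralizer {z} ≤ ψ.range := by
  obtain ⟨A, rfl⟩ := QuotientGroup.mk_surjective z
  have hA := SL2R.coe_ne_smul_one (mt (QuotientGroup.eq_one_iff A).mpr hz)
  set t := (A : Matrix (Fin 2) (Fin 2) ℝ).trace
  set M := (A : Matrix (Fin 2) (Fin 2) ℝ) - (t / 2) • 1 with hMdef
  have hM : M.trace = 0 := by simp [M, t]
  have hMs : ∀ r : ℝ, M ≠ r • 1 := fun r hr ↦ hA (r + t / 2) <| by
    rw [add_smul, ← hr, hMdef, sub_add_cancel]
  obtain ⟨c, d, h⟩ := exists_isCosSinPair M.det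
  refine ⟨(QuotientGroup.mk' _).comp (SL2R.cosSinHom hM h),
    continuous_quotient_mk'.comp (SL2R.continuous_cosSinHom hM h), ?_, ?_⟩
  · filter_upwards [h.eventually_sin_ne_zero] with s hs h1
    exact hs <| SL2R.sin_eq_zero_of_cosSinHom_mem_center hM h hMs <|
      (QuotientGroup.eq_one_iff _).mp h1
  · intro γ hγ
    obtain ⟨B, rfl⟩ := QuotientGroup.mk_surjective γ
    have hAB := SL2R.commute_of_commute_mk (Subgroup.mem_centralizer_singleton_iff.mp hγ).symm
    obtain ⟨x, y, hxy⟩ := exists_eq_smul_one_add_smul_of_commute hA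
      (congrArg (fun g : SL2R ↦ (g : Matrix (Fin 2) (Fin 2) ℝ)) hAB.eq)
    obtain ⟨s, hs⟩ := SL2R.exists_cosSinHom_eq_or_eq_neg hM h (x := x + y * (t / 2)) (y := y)
      (by rw [hxy, hMdef]; module)
    exact ⟨.ofAdd s, SL2R.mk_eq_mk_iff.mpr hs⟩

theorem Subgroup.isCyclic_of_le_range {G : Type*} [Group G] [TopologicalSpace G]
    {Γ : Subgroup G} [DiscreteTopology Γ] {ψ : Multiplicative ℝ →* G} (hψ : Continuous ψ)
    (hker : ∀ᶠ s in 𝓝[>] 0, ψ (.ofAdd s) ≠ 1) (hΓ : Γ ≤ ψ.range) : IsCyclic Γ := by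
  obtain ⟨U, hU, hUΓ⟩ := isOpen_induced_iff.mp (isOpen_discrete ({1} : Set Γ))
  have hU1 : (1 : G) ∈ U := by
    simpa using congrArg (1 ∈ ·) hUΓ
  have hnear : ∀ᶠ s in 𝓝[>] (0 : ℝ), ψ (.ofAdd s) ∈ U ∧ ψ (.ofAdd s) ≠ 1 := by
    refine Eventually.and ?_ hker
    refine nhdsWithin_le_nhds ((hψ.comp continuous_ofAdd).continuousAt.preimage_mem_nhds ?_)
    simpa using hU.mem_nhds hU1
  obtain ⟨a, ha, hsub⟩ := mem_nhdsGT_iff_exists_Ioo_subset.mp hnear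
  obtain ⟨b, hb⟩ := Subgroup.cyclic_of_isolated_one (H := Γ.comap ψ) (a := .ofAdd a)
    (Multiplicative.ofAdd_lt.mpr ha) <| disjoint_left.mpr fun s hsΓ hs ↦ by
      obtain ⟨hsU, hs1⟩ := hsub (a := s.toAdd) hs
      have : (⟨_, hsΓ⟩ : Γ) ∈ ({1} : Set Γ) := hUΓ ▸ hsU
      exact hs1 (congrArg Subtype.val this)
  rw [Subgroup.isCyclic_iff_exists_zpowers_eq_top]
  refine ⟨ψ b, ?_⟩
  rw [← Subgroup.map_comap_eq_self hΓ, hb, MonoidHom.map_closure, image_singleton,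
    Subgroup.zpowers_eq_closure]

/-- If `Γ` is a discrete subgroup of `PSL₂(ℝ)` whose center is
nontrivial, then `Γ` is cyclic; equivalently, the center of a discrete subgroup
of `PSL₂(ℝ)` is trivial unless the subgroup is cyclic. -/
theorem discrete_subgroup_with_center_is_cyclic (Γ : Subgroup PSL2R)
    [DiscreteTopology Γ] (h : Subgroup.center Γ ≠ ⊥) : IsCyclic Γ := by
  obtain ⟨z, hz⟩ := Subgroup.ne_bot_iff_exists_ne_one.mp h
  obtain ⟨ψ, hψ, hker, hcent⟩ := PSL2R.exists_centralizer_le_range (z := (z : Γ)) fun h1 ↦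
    hz (Subtype.ext (Subtype.ext h1))
  refine Subgroup.isCyclic_of_le_range hψ hker fun γ hγ ↦ hcent ?_
  rw [Subgroup.mem_centralizer_singleton_iff]
  exact congrArg Subtype.val (Subgroup.mem_center_iff.mp z.2 ⟨γ, hγ⟩)
end
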